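/- arXiv:math/9508205 — 3 statements merged into one kernel-verified Lean document; each statement's English description precedes it below -/
import Mathlib

section
/- Let n ≥ 3 be odd. Consider the (undirected, simple) graph G on ℕ × (ZMod n) where (i, ℓ) is adjacent to (j, ℓ') if and only if (i < j and ℓ' = ℓ + 1) or (j < i and ℓ = ℓ' + 1). Then G contains no cycle of odd length ≤ n. -/
/-- For odd `n ≥ 3`, the graph on `ℕ × ZMod n` where `(i, ℓ)` is adjacent to
`(j, ℓ')` iff (`i < j` and `ℓ' = ℓ + 1`) or (`j < i` and `ℓ = ℓ' + 1`) contains no cycle of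
odd length `≤ n`. -/
theorem stmt_1 (n : ℕ) (hn : 3 ≤ n) (hodd : Odd n) :
    ¬ ∃ (k : ℕ) (v : ℕ → ℕ × ZMod n), 3 ≤ k ∧ k ≤ n ∧ Odd k ∧
      (∀ i < k, ∀ j < k, v i = v j → i = j) ∧
      ∀ i < k,
        ((v i).1 < (v ((i + 1) % k)).1 ∧ (v ((i + 1) % k)).2 = (v i).2 + 1) ∨
        ((v ((i + 1) % k)).1 < (v i).1 ∧ (v i).2 = (v ((i + 1) % k)).2 + 1) := by
  classical
  rintro ⟨k, v, hk3, hkn, hkodd, hinj, hedge⟩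
  have hkpos : 0 < k := by omega
  -- sign of each step
  set ε : ℕ → ℤ := fun i =>
    if ((v i).1 < (v ((i + 1) % k)).1 ∧ (v ((i + 1) % k)).2 = (v i).2 + 1) then 1 else -1
    with hε
  have hstep : ∀ i < k, (v ((i + 1) % k)).2 = (v i).2 + ((ε i : ℤ) : ZMod n) := by
    intro i hi
    by_cases h : ((v i).1 < (v ((i + 1) % k)).1 ∧ (v ((i + 1) % k)).2 = (v i).2 + 1)
    · simp [hε, h, h.2]
    · have h2 := (hedge i hi).resolve_left h
      simp only [hε, if_neg h]
      push_cast
      rw [h2.2]; ring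
  -- telescoping: the partial sums of ε track the second coordinate
  have htel : ∀ m ≤ k, (v (m % k)).2 = (v 0).2 + ((∑ i ∈ Finset.range m, ε i : ℤ) : ZMod n) := by
    intro m
    induction m with
    | zero => intro _; simp [Nat.zero_mod]
    | succ m ih =>
      intro hm
      have hmk : m < k := by omega
      have ihm := ih (le_of_lt hmk)
      have hmod : m % k = m := Nat.mod_eq_of_lt hmk
      have := hstep m hmk
      rw [hmod] at ihm
      rw [this, Finset.sum_range_succ, ihm]
      push_cast
      ring
  have hS0 : ((∑ i ∈ Finset.range k, ε i : ℤ) : ZMod n) = 0 := by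
    have := htel k le_rfl
    rw [Nat.mod_self] at this
    have h0 : (0 : ℕ) % k = 0 := Nat.zero_mod k
    nth_rewrite 1 [← h0] at this
    rw [htel 0 (by omega)] at this
    simpa using this
  set S : ℤ := ∑ i ∈ Finset.range k, ε i with hSdef
  have hdvd : (n : ℤ) ∣ S := by
    rwa [ZMod.intCast_zmod_eq_zero_iff_dvd] at hS0
  have habs1 : ∀ i, |ε i| ≤ 1 := by
    intro i
    simp only [hε]
    split <;> simp
  have hSabs : |S| ≤ (k : ℤ) := by
    calc |S| ≤ ∑ i ∈ Finset.range k, |ε i| := Finset.abs_sum_le_sum_abs _ _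
      _ ≤ ∑ i ∈ Finset.range k, 1 := Finset.sum_le_sum (fun i _ => habs1 i)
      _ = (k : ℤ) := by simp
  -- S is odd
  have hSodd : Odd S := by
    have key : ∀ m, Even (∑ i ∈ Finset.range m, ε i - m) := by
      intro m
      induction m with
      | zero => simp
      | succ m ih =>
        rw [Finset.sum_range_succ]
        have : ∑ i ∈ Finset.range m, ε i + ε m - (↑m + 1)
            = (∑ i ∈ Finset.range m, ε i - m) + (ε m - 1) := by push_cast; ring
        push_cast
        rw [this]
        refine ih.add ?_
        simp only [hε]
        split
        · simp
        · decide
      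
    have hkodd' : Odd (k : ℤ) := by exact_mod_cast hkodd
    have := key k
    rcases this with ⟨c, hc⟩
    rcases hkodd' with ⟨d, hd⟩
    rw [← hSdef] at hc
    exact ⟨c + d, by omega⟩
  have hSne : S ≠ 0 := by
    intro h
    rw [h] at hSodd
    exact (by decide : ¬ Odd (0:ℤ)) hSodd
  have hnle : (n : ℤ) ≤ |S| := Int.le_of_dvd (abs_pos.mpr hSne) ((dvd_abs _ _).mpr hdvd)
  have hkn' : (k : ℤ) ≤ n := by exact_mod_cast hkn
  have habsS : |S| = (k : ℤ) ∧ (k : ℤ) = n := by constructor <;> omega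
  -- so S = k or S = -k, hence all signs equal
  have hcases : S = (k : ℤ) ∨ S = -(k : ℤ) := by
    rcases abs_eq (by positivity : (0:ℤ) ≤ (k:ℤ)) |>.mp habsS.1 with h | h
    · exact Or.inl h
    · exact Or.inr h
  rcases hcases with hpos | hneg
  · -- all ε i = 1 : all steps case A, first coordinate strictly increasing
    have hall : ∀ i ∈ Finset.range k, ε i = 1 := by
      have hle : ∀ i ∈ Finset.range k, ε i ≤ 1 := fun i _ =>
        (abs_le.mp (habs1 i)).2
      have hsum : ∑ i ∈ Finset.range k, ε i = ∑ i ∈ Finset.range k, (1:ℤ) := by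
        rw [← hSdef, hpos]; simp
      exact (Finset.sum_eq_sum_iff_of_le hle).mp hsum
    have hA : ∀ i < k, (v i).1 < (v ((i + 1) % k)).1 := by
      intro i hi
      have h1 := hall i (Finset.mem_range.mpr hi)
      simp only [hε] at h1
      by_contra hc
      rw [if_neg (fun h => hc h.1)] at h1
      omega
    have hmono : ∀ m < k, (v 0).1 ≤ (v m).1 := by
      intro m
      induction m with
      | zero => intro _; exact le_rfl
      | succ m ih =>
        intro hm
        have hmk : m < k := by omega
        have := hA m hmk
        rw [Nat.mod_eq_of_lt hm] at this
        exact le_of_lt (lt_of_le_of_lt (ih hmk) this)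
    have hlast := hA (k - 1) (by omega)
    have : (k - 1 + 1) % k = 0 := by
      have : k - 1 + 1 = k := by omega
      rw [this, Nat.mod_self]
    rw [this] at hlast
    exact absurd (hmono (k-1) (by omega)) (by omega)
  · -- all ε i = -1 : first coordinate strictly decreasing
    have hall : ∀ i ∈ Finset.range k, ε i = -1 := by
      have hle : ∀ i ∈ Finset.range k, (-1:ℤ) ≤ ε i := fun i _ =>
        (abs_le.mp (habs1 i)).1
      have hsum : ∑ i ∈ Finset.range k, (-1:ℤ) = ∑ i ∈ Finset.range k, ε i := by
        rw [← hSdef, hneg]; simp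
      intro i hi
      exact ((Finset.sum_eq_sum_iff_of_le hle).mp hsum i hi).symm
    have hB : ∀ i < k, (v ((i + 1) % k)).1 < (v i).1 := by
      intro i hi
      have h1 := hall i (Finset.mem_range.mpr hi)
      simp only [hε] at h1
      rcases hedge i hi with h | h
      · rw [if_pos h] at h1; omega
      · exact h.1
    have hmono : ∀ m < k, (v m).1 ≤ (v 0).1 := by
      intro m
      induction m with
      | zero => intro _; exact le_rfl
      | succ m ih =>
        intro hm
        have hmk : m < k := by omega
        have := hB m hmk
        rw [Nat.mod_eq_of_lt hm] at this
        exact le_of_lt (lt_of_lt_of_le this (ih hmk))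
    have hlast := hB (k - 1) (by omega)
    have : (k - 1 + 1) % k = 0 := by
      have : k - 1 + 1 = k := by omega
      rw [this, Nat.mod_self]
    rw [this] at hlast
    exact absurd (hmono (k-1) (by omega)) (by omega)
end

section
/- Fix n ≥ 1. Call a structure M with binary relations R_0, ..., R_n a T_0-model if: (a) R_{m-1} ⊆ R_m for 1 ≤ m ≤ n; (b) R_n holds of all pairs; (c) R_{n-1} is irreflexive; (d) whenever ℓ + k + 1 = m ≤ n, x R_ℓ y and y R_k z imply x R_m z. Suppose M_0, M_1, M_2 are T_0-models with M_0 an induced substructure of both M_1 and M_2, and the universes satisfy M_1 ∩ M_2 = M_0. Define M on M_1 ∪ M_2 by: (a, b) ∈ R_m^M iff m = n, or for some i ∈ {1,2}, (a, b) ∈ R_m^{M_i}, or for some i ∈ {1,2}, a ∈ M_i \ M_0, b ∈ M_{3-i} \ M_0, and there exist c ∈ M_0 and ℓ, k with m = ℓ + k + 1, (a, c) ∈ R_ℓ^{M_i} and (c, b) ∈ R_k^{M_{3-i}}. Then M is a T_0-model and both M_1 and M_2 are induced substructures of M. -/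
/-- A `T₀`-model with universe `S` and binary relations `R 0, ..., R n`:
relations are supported on `S`; `R (m-1) ⊆ R m` for `1 ≤ m ≤ n`; `R n` holds of all pairs
from `S`; `R (n-1)` is irreflexive; and `ℓ + k + 1 = m ≤ n` gives transitivity-type
composition `R ℓ ∘ R k ⊆ R m`. -/
def IsT0Model {V : Type*} (n : ℕ) (S : Set V) (R : ℕ → V → V → Prop) : Prop :=
  (∀ m a b, R m a b → a ∈ S ∧ b ∈ S) ∧
  (∀ m, 1 ≤ m → m ≤ n → ∀ a b, R (m - 1) a b → R m a b) ∧
  (∀ a ∈ S, ∀ b ∈ S, R n a b) ∧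
  (∀ a ∈ S, ¬ R (n - 1) a a) ∧
  (∀ ℓ k m, ℓ + k + 1 = m → m ≤ n → ∀ a b c, R ℓ a b → R k b c → R m a c)

/-- Amalgamation of `T₀`-models (Claim 2.3(2)). Given `T₀`-models on `M₁`, `M₂`
inducing the same structure on `M₀ = M₁ ∩ M₂`, the described amalgam on `M₁ ∪ M₂` is a
`T₀`-model inducing the original structures on `M₁` and `M₂`. -/
theorem stmt_4 {V : Type*} (n : ℕ) (hn : 1 ≤ n)
    (M₀ M₁ M₂ : Set V) (hM : M₁ ∩ M₂ = M₀)
    (R₁ R₂ : ℕ → V → V → Prop)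
    (h₁ : IsT0Model n M₁ R₁) (h₂ : IsT0Model n M₂ R₂)
    (hagree : ∀ m, ∀ a ∈ M₀, ∀ b ∈ M₀, (R₁ m a b ↔ R₂ m a b))
    (R : ℕ → V → V → Prop)
    (hR : ∀ m a b, R m a b ↔
      ((m = n ∧ a ∈ M₁ ∪ M₂ ∧ b ∈ M₁ ∪ M₂) ∨
        R₁ m a b ∨ R₂ m a b ∨
        (a ∈ M₁ \ M₀ ∧ b ∈ M₂ \ M₀ ∧
          ∃ c ∈ M₀, ∃ ℓ k, m = ℓ + k + 1 ∧ R₁ ℓ a c ∧ R₂ k c b) ∨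
        (a ∈ M₂ \ M₀ ∧ b ∈ M₁ \ M₀ ∧
          ∃ c ∈ M₀, ∃ ℓ k, m = ℓ + k + 1 ∧ R₂ ℓ a c ∧ R₁ k c b))) :
    IsT0Model n (M₁ ∪ M₂) R ∧
      (∀ m a b, a ∈ M₁ → b ∈ M₁ → (R m a b ↔ R₁ m a b)) ∧
      (∀ m a b, a ∈ M₂ → b ∈ M₂ → (R m a b ↔ R₂ m a b)) := by
  obtain ⟨hs₁, hmono₁, htot₁, hirr₁, hcomp₁⟩ := h₁
  obtain ⟨hs₂, hmono₂, htot₂, hirr₂, hcomp₂⟩ := h₂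
  have h01 : M₀ ⊆ M₁ := by rw [← hM]; exact Set.inter_subset_left
  have h02 : M₀ ⊆ M₂ := by rw [← hM]; exact Set.inter_subset_right
  have hmem : ∀ a, a ∈ M₁ → a ∈ M₂ → a ∈ M₀ := fun a ha hb => hM ▸ ⟨ha, hb⟩
  refine ⟨⟨?_, ?_, ?_, ?_, ?_⟩, ?_, ?_⟩
  · -- support
    intro m a b h
    rw [hR] at h
    rcases h with ⟨_, ha, hb⟩ | h | h | ⟨ha, hb, _⟩ | ⟨ha, hb, _⟩
    · exact ⟨ha, hb⟩
    · exact ⟨Or.inl (hs₁ m a b h).1, Or.inl (hs₁ m a b h).2⟩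
    · exact ⟨Or.inr (hs₂ m a b h).1, Or.inr (hs₂ m a b h).2⟩
    · exact ⟨Or.inl ha.1, Or.inr hb.1⟩
    · exact ⟨Or.inr ha.1, Or.inl hb.1⟩
  · -- monotone
    intro m h1m hmn a b h
    rw [hR] at h ⊢
    rcases h with ⟨h, _, _⟩ | h | h | ⟨ha, hb, d, hd, p, q, hpq, hp, hq⟩ |
        ⟨ha, hb, d, hd, p, q, hpq, hp, hq⟩
    · omega
    · exact Or.inr (Or.inl (hmono₁ m h1m hmn a b h))
    · exact Or.inr (Or.inr (Or.inl (hmono₂ m h1m hmn a b h)))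
    · exact Or.inr (Or.inr (Or.inr (Or.inl ⟨ha, hb, d, hd, p, q + 1, by omega, hp,
        hmono₂ (q + 1) (by omega) (by omega) d b hq⟩)))
    · exact Or.inr (Or.inr (Or.inr (Or.inr ⟨ha, hb, d, hd, p, q + 1, by omega, hp,
        hmono₁ (q + 1) (by omega) (by omega) d b hq⟩)))
  · -- totality at n
    intro a ha b hb
    rw [hR]
    exact Or.inl ⟨rfl, ha, hb⟩
  · -- irreflexivity at n - 1
    intro a _ h
    rw [hR] at h
    rcases h with ⟨h, _, _⟩ | h | h | ⟨ha, hb, _⟩ | ⟨ha, hb, _⟩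
    · omega
    · exact hirr₁ a (hs₁ _ a a h).1 h
    · exact hirr₂ a (hs₂ _ a a h).1 h
    · exact ha.2 (hmem a ha.1 hb.1)
    · exact ha.2 (hmem a hb.1 ha.1)
  · -- composition
    intro ℓ k m hm hmn a b c hab hbc
    rw [hR] at hab hbc ⊢
    rcases hab with ⟨hℓ, _, _⟩ | hab | hab | ⟨ha, hb, d, hd, p, q, hpq, had, hdb⟩ |
        ⟨ha, hb, d, hd, p, q, hpq, had, hdb⟩
    · omega
    · -- A1 : R₁ ℓ a b
      rcases hbc with ⟨hk, _, _⟩ | hbc | hbc | ⟨hb', hc, e, he, r, s, hrs, hbe, hec⟩ |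
          ⟨hb', hc, e, he, r, s, hrs, hbe, hec⟩
      · omega
      · exact Or.inr (Or.inl (hcomp₁ ℓ k m hm hmn a b c hab hbc))
      · -- A1,B2
        have hb0 : b ∈ M₀ := hmem b (hs₁ ℓ a b hab).2 (hs₂ k b c hbc).1
        by_cases ha2 : a ∈ M₂
        · have ha0 : a ∈ M₀ := hmem a (hs₁ ℓ a b hab).1 ha2
          exact Or.inr (Or.inr (Or.inl (hcomp₂ ℓ k m hm hmn a b c
            ((hagree ℓ a ha0 b hb0).mp hab) hbc)))
        · by_cases hc1 : c ∈ M₁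
          · have hc0 : c ∈ M₀ := hmem c hc1 (hs₂ k b c hbc).2
            exact Or.inr (Or.inl (hcomp₁ ℓ k m hm hmn a b c hab
              ((hagree k b hb0 c hc0).mpr hbc)))
          · exact Or.inr (Or.inr (Or.inr (Or.inl ⟨⟨(hs₁ ℓ a b hab).1, fun h => ha2 (h02 h)⟩,
              ⟨(hs₂ k b c hbc).2, fun h => hc1 (h01 h)⟩, b, hb0, ℓ, k, hm.symm, hab, hbc⟩)))
      · -- A1,B3 : b ∈ M₁ \ M₀, c ∈ M₂ \ M₀
        have had : R₁ (ℓ + r + 1) a e := hcomp₁ ℓ r (ℓ + r + 1) rfl (by omega) a b e hab hbe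
        by_cases ha2 : a ∈ M₂
        · have ha0 : a ∈ M₀ := hmem a (hs₁ ℓ a b hab).1 ha2
          exact Or.inr (Or.inr (Or.inl (hcomp₂ (ℓ + r + 1) s m (by omega) hmn a e c
            ((hagree _ a ha0 e he).mp had) hec)))
        · exact Or.inr (Or.inr (Or.inr (Or.inl ⟨⟨(hs₁ ℓ a b hab).1, fun h => ha2 (h02 h)⟩,
            hc, e, he, ℓ + r + 1, s, by omega, had, hec⟩)))
      · exact absurd (hmem b (hs₁ ℓ a b hab).2 hb'.1) hb'.2
    · -- A2 : R₂ ℓ a b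
      rcases hbc with ⟨hk, _, _⟩ | hbc | hbc | ⟨hb', hc, e, he, r, s, hrs, hbe, hec⟩ |
          ⟨hb', hc, e, he, r, s, hrs, hbe, hec⟩
      · omega
      · -- A2,B1
        have hb0 : b ∈ M₀ := hmem b (hs₁ k b c hbc).1 (hs₂ ℓ a b hab).2
        by_cases ha1 : a ∈ M₁
        · have ha0 : a ∈ M₀ := hmem a ha1 (hs₂ ℓ a b hab).1
          exact Or.inr (Or.inl (hcomp₁ ℓ k m hm hmn a b c
            ((hagree ℓ a ha0 b hb0).mpr hab) hbc))
        · by_cases hc2 : c ∈ M₂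
          · have hc0 : c ∈ M₀ := hmem c (hs₁ k b c hbc).2 hc2
            exact Or.inr (Or.inr (Or.inl (hcomp₂ ℓ k m hm hmn a b c hab
              ((hagree k b hb0 c hc0).mp hbc))))
          · exact Or.inr (Or.inr (Or.inr (Or.inr ⟨⟨(hs₂ ℓ a b hab).1, fun h => ha1 (h01 h)⟩,
              ⟨(hs₁ k b c hbc).2, fun h => hc2 (h02 h)⟩, b, hb0, ℓ, k, hm.symm, hab, hbc⟩)))
      · exact Or.inr (Or.inr (Or.inl (hcomp₂ ℓ k m hm hmn a b c hab hbc)))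
      · exact absurd (hmem b hb'.1 (hs₂ ℓ a b hab).2) hb'.2
      · -- A2,B4 : b ∈ M₂ \ M₀, c ∈ M₁ \ M₀
        have had : R₂ (ℓ + r + 1) a e := hcomp₂ ℓ r (ℓ + r + 1) rfl (by omega) a b e hab hbe
        by_cases ha1 : a ∈ M₁
        · have ha0 : a ∈ M₀ := hmem a ha1 (hs₂ ℓ a b hab).1
          exact Or.inr (Or.inl (hcomp₁ (ℓ + r + 1) s m (by omega) hmn a e c
            ((hagree _ a ha0 e he).mpr had) hec))
        · exact Or.inr (Or.inr (Or.inr (Or.inr ⟨⟨(hs₂ ℓ a b hab).1, fun h => ha1 (h01 h)⟩,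
            hc, e, he, ℓ + r + 1, s, by omega, had, hec⟩)))
    · -- A3 : a ∈ M₁ \ M₀, b ∈ M₂ \ M₀, R₁ p a d, R₂ q d b
      rcases hbc with ⟨hk, _, _⟩ | hbc | hbc | ⟨hb', hc, e, he, r, s, hrs, hbe, hec⟩ |
          ⟨hb', hc, e, he, r, s, hrs, hbe, hec⟩
      · omega
      · exact absurd (hmem b (hs₁ k b c hbc).1 hb.1) hb.2
      · -- A3,B2
        have hdc : R₂ (q + k + 1) d c := hcomp₂ q k (q + k + 1) rfl (by omega) d b c hdb hbc
        by_cases hc1 : c ∈ M₁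
        · have hc0 : c ∈ M₀ := hmem c hc1 (hs₂ k b c hbc).2
          exact Or.inr (Or.inl (hcomp₁ p (q + k + 1) m (by omega) hmn a d c had
            ((hagree _ d hd c hc0).mpr hdc)))
        · exact Or.inr (Or.inr (Or.inr (Or.inl ⟨ha, ⟨(hs₂ k b c hbc).2,
            fun h => hc1 (h01 h)⟩, d, hd, p, q + k + 1, by omega, had, hdc⟩)))
      · exact absurd (hmem b hb'.1 hb.1) hb'.2
      · -- A3,B4
        have hde : R₂ (q + r + 1) d e := hcomp₂ q r (q + r + 1) rfl (by omega) d b e hdb hbe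
        have hde₁ : R₁ (q + r + 1) d e := (hagree _ d hd e he).mpr hde
        have hae : R₁ (p + (q + r + 1) + 1) a e :=
          hcomp₁ p (q + r + 1) _ rfl (by omega) a d e had hde₁
        exact Or.inr (Or.inl (hcomp₁ (p + (q + r + 1) + 1) s m (by omega) hmn a e c hae hec))
    · -- A4 : a ∈ M₂ \ M₀, b ∈ M₁ \ M₀, R₂ p a d, R₁ q d b
      rcases hbc with ⟨hk, _, _⟩ | hbc | hbc | ⟨hb', hc, e, he, r, s, hrs, hbe, hec⟩ |
          ⟨hb', hc, e, he, r, s, hrs, hbe, hec⟩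
      · omega
      · -- A4,B1
        have hdc : R₁ (q + k + 1) d c := hcomp₁ q k (q + k + 1) rfl (by omega) d b c hdb hbc
        by_cases hc2 : c ∈ M₂
        · have hc0 : c ∈ M₀ := hmem c (hs₁ k b c hbc).2 hc2
          exact Or.inr (Or.inr (Or.inl (hcomp₂ p (q + k + 1) m (by omega) hmn a d c had
            ((hagree _ d hd c hc0).mp hdc))))
        · exact Or.inr (Or.inr (Or.inr (Or.inr ⟨ha, ⟨(hs₁ k b c hbc).2,
            fun h => hc2 (h02 h)⟩, d, hd, p, q + k + 1, by omega, had, hdc⟩)))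
      · exact absurd (hmem b hb.1 (hs₂ k b c hbc).1) hb.2
      · -- A4,B3
        have hde : R₁ (q + r + 1) d e := hcomp₁ q r (q + r + 1) rfl (by omega) d b e hdb hbe
        have hde₂ : R₂ (q + r + 1) d e := (hagree _ d hd e he).mp hde
        have hae : R₂ (p + (q + r + 1) + 1) a e :=
          hcomp₂ p (q + r + 1) _ rfl (by omega) a d e had hde₂
        exact Or.inr (Or.inr (Or.inl
          (hcomp₂ (p + (q + r + 1) + 1) s m (by omega) hmn a e c hae hec)))
      · exact absurd (hmem b hb.1 hb'.1) hb.2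
  · -- induced on M₁
    intro m a b ha hb
    rw [hR]
    constructor
    · rintro (⟨rfl, _, _⟩ | h | h | ⟨ha', hb', _⟩ | ⟨ha', hb', _⟩)
      · exact htot₁ a ha b hb
      · exact h
      · exact (hagree m a (hmem a ha (hs₂ m a b h).1) b (hmem b hb (hs₂ m a b h).2)).mpr h
      · exact absurd (hmem b hb hb'.1) hb'.2
      · exact absurd (hmem a ha ha'.1) ha'.2
    · intro h
      exact Or.inr (Or.inl h)
  · -- induced on M₂
    intro m a b ha hb
    rw [hR]
    constructor
    · rintro (⟨rfl, _, _⟩ | h | h | ⟨ha', hb', _⟩ | ⟨ha', hb', _⟩)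
      · exact htot₂ a ha b hb
      · exact (hagree m a (hmem a (hs₁ m a b h).1 ha) b (hmem b (hs₁ m a b h).2 hb)).mp h
      · exact h
      · exact absurd (hmem a ha'.1 ha) ha'.2
      · exact absurd (hmem b hb'.1 hb) hb'.2
    · intro h
      exact Or.inr (Or.inr (Or.inl h))
end

section
/- Let T be a complete first-order theory. If some formula φ(x̄, ȳ) witnesses SOP_n for T, then some (possibly different) formula ψ(x̄, ȳ) witnesses SOP_{≤ n} for T, i.e. the no-cycle condition holds simultaneously for every cycle length m with 2 ≤ m ≤ n. -/
open FirstOrder FirstOrder.Language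

universe u v

/-- The formula `φ(x̄, ȳ)` (with `lg x̄ = lg ȳ = d`) witnesses `SOP_n` for `T`. -/
def WitnessesSOP {L : FirstOrder.Language.{u, v}} (T : L.Theory) (n d : ℕ)
    (φ : L.Formula (Fin d ⊕ Fin d)) : Prop :=
  ∃ (M : Theory.ModelType.{u, v, max u v} T) (a : ℕ → Fin d → M),
    (∀ k m : ℕ, k < m → Formula.Realize φ (Sum.elim (a k) (a m))) ∧
    ¬ ∃ x : Fin n → Fin d → M,
      ∀ ℓ k : Fin n, (k : ℕ) = ((ℓ : ℕ) + 1) % n →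
        Formula.Realize φ (Sum.elim (x ℓ) (x k))

/-- The formula `ψ` witnesses `SOP_{≤n}` for `T`: as `SOP_n`, but with no `ψ`-cycle of any
length `m` with `2 ≤ m ≤ n`. -/
def WitnessesSOPLe {L : FirstOrder.Language.{u, v}} (T : L.Theory) (n d : ℕ)
    (ψ : L.Formula (Fin d ⊕ Fin d)) : Prop :=
  ∃ (M : Theory.ModelType.{u, v, max u v} T) (a : ℕ → Fin d → M),
    (∀ k m : ℕ, k < m → Formula.Realize ψ (Sum.elim (a k) (a m))) ∧
    ∀ m : ℕ, 2 ≤ m → m ≤ n →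
      ¬ ∃ x : Fin m → Fin d → M,
        ∀ ℓ k : Fin m, (k : ℕ) = ((ℓ : ℕ) + 1) % m →
          Formula.Realize ψ (Sum.elim (x ℓ) (x k))

/-! Let `R` be the relation defined by `φ`: it has an infinite chain `a` but no `n`-cycle. Delete
from `R` every edge `x → y` that is closed by an `R`-path `y → x` of length at most `n - 2`; this
is first-order, as a path of fixed length is. The pruned relation has no cycle of length
`2 ≤ m < n`, since any edge of such a cycle is closed by the rest, and no `n`-cycle, being
contained in `R`. Along `k ↦ a (n * k)` no edge is deleted: a short path from `a (n * q)` back to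
`a (n * p)` would close the chain `a (n * p), a (n * p + 1), …, a (n * q)`, shortcut suitably,
into an `n`-cycle. -/

namespace Relation

variable {α : Type*} {R S : α → α → Prop}

def HasPath (R : α → α → Prop) : ℕ → α → α → Prop
  | 0, x, y => x = y
  | k + 1, x, y => ∃ z, R x z ∧ HasPath R k z y

def HasCycle (R : α → α → Prop) (m : ℕ) : Prop :=
  ∃ x : Fin m → α, ∀ ℓ k : Fin m, (k : ℕ) = ((ℓ : ℕ) + 1) % m → R (x ℓ) (x k)

theorem hasPath_one {x y : α} : HasPath R 1 x y ↔ R x y := by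
  simp [HasPath]

theorem HasPath.mono (hRS : ∀ x y, R x y → S x y) {k : ℕ} {x y : α} (h : HasPath R k x y) :
    HasPath S k x y := by
  induction k generalizing x with
  | zero => exact h
  | succ k ih =>
    obtain ⟨z, hxz, hzy⟩ := h
    exact ⟨z, hRS x z hxz, ih hzy⟩

theorem HasPath.append {k l : ℕ} {x y z : α} (hxy : HasPath R k x y) (hyz : HasPath R l y z) :
    HasPath R (k + l) x z := by
  induction k generalizing x with
  | zero => rwa [Nat.zero_add, hxy]
  | succ k ih =>
    obtain ⟨w, hxw, hwy⟩ := hxy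
    rw [Nat.succ_add]
    exact ⟨w, hxw, ih hwy⟩

theorem hasPath_iff {k : ℕ} {x y : α} :
    HasPath R k x y ↔
      ∃ f : ℕ → α, f 0 = x ∧ f k = y ∧ ∀ i < k, R (f i) (f (i + 1)) := by
  induction k generalizing x with
  | zero =>
    exact ⟨fun h => ⟨fun _ => x, rfl, h, by simp⟩, fun ⟨f, h0, hf0, _⟩ => h0 ▸ hf0⟩
  | succ k ih =>
    constructor
    · rintro ⟨z, hxz, hzy⟩
      obtain ⟨g, rfl, hgk, hg⟩ := ih.mp hzy
      refine ⟨fun | 0 => x | i + 1 => g i, rfl, hgk, ?_⟩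
      rintro (_ | i) hi
      · exact hxz
      · exact hg i (by omega)
    · rintro ⟨f, rfl, hfk, hf⟩
      exact ⟨f 1, hf 0 k.succ_pos,
        ih.mpr ⟨fun i => f (i + 1), rfl, hfk, fun i hi => hf (i + 1) (by omega)⟩⟩

theorem hasCycle_zero : HasCycle R 0 :=
  ⟨Fin.elim0, fun ℓ => ℓ.elim0⟩

theorem hasCycle_iff {m : ℕ} (hm : 0 < m) : HasCycle R m ↔ ∃ x, HasPath R m x x := by
  constructor
  · rintro ⟨x, hx⟩
    refine ⟨x ⟨0, hm⟩, hasPath_iff.mpr ⟨fun i => x ⟨i % m, Nat.mod_lt i hm⟩, ?_, ?_, ?_⟩⟩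
    · simp
    · simp
    · exact fun i _ => hx _ _ (Nat.mod_add_mod i m 1).symm
  · rintro ⟨x, hx⟩
    obtain ⟨f, hf0, hfm, hf⟩ := hasPath_iff.mp hx
    refine ⟨fun ℓ => f ℓ, fun ℓ k hk => ?_⟩
    rcases Nat.lt_or_ge ((ℓ : ℕ) + 1) m with hlt | hge
    · rw [Nat.mod_eq_of_lt hlt] at hk
      simpa [hk] using hf ℓ ℓ.isLt
    · have hℓ : (ℓ : ℕ) + 1 = m := by omega
      have hk0 : (k : ℕ) = 0 := by rw [hk, hℓ, Nat.mod_self]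
      simpa [hk0, hf0, ← hfm, hℓ] using hf ℓ ℓ.isLt

theorem HasCycle.mono (hRS : ∀ x y, R x y → S x y) {m : ℕ} (h : HasCycle R m) :
    HasCycle S m :=
  let ⟨x, hx⟩ := h
  ⟨x, fun ℓ k hk => hRS _ _ (hx ℓ k hk)⟩

theorem hasPath_of_chain {a : ℕ → α} (ha : ∀ i j, i < j → R (a i) (a j)) {k i j : ℕ}
    (hk : 0 < k) (hij : i + k ≤ j) : HasPath R k (a i) (a j) := by
  induction k generalizing i with
  | zero => exact absurd hk (lt_irrefl 0)
  | succ k ih =>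
    rcases Nat.eq_zero_or_pos k with rfl | hk'
    · exact hasPath_one.mpr (ha i j (by omega))
    · exact ⟨a (i + 1), ha i (i + 1) (by omega), ih hk' (by omega)⟩

def PruneShortCycles (R : α → α → Prop) (n : ℕ) (x y : α) : Prop :=
  R x y ∧ ∀ j < n - 2, ¬ HasPath R (j + 1) y x

theorem PruneShortCycles.le {n : ℕ} {x y : α} (h : PruneShortCycles R n x y) : R x y :=
  h.1

theorem not_hasCycle_pruneShortCycles {n m : ℕ} (h2m : 2 ≤ m) (hmn : m < n) :
    ¬ HasCycle (PruneShortCycles R n) m := by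
  obtain ⟨k, rfl⟩ : ∃ k, m = k + 2 := ⟨m - 2, by omega⟩
  rw [hasCycle_iff (by omega)]
  rintro ⟨x, y, hxy, hyx⟩
  exact hxy.2 k (by omega) (hyx.mono fun _ _ => PruneShortCycles.le)

theorem pruneShortCycles_of_chain {n : ℕ} (hR : ¬ HasCycle R n) {a : ℕ → α}
    (ha : ∀ i j, i < j → R (a i) (a j)) {p q : ℕ} (hpq : p < q) :
    PruneShortCycles R n (a (n * p)) (a (n * q)) := by
  have hn : 0 < n := Nat.pos_of_ne_zero fun hn => hR (hn ▸ hasCycle_zero)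
  have hspace : n * p + n ≤ n * q := by nlinarith
  refine ⟨ha _ _ (by omega), fun j hj hback => hR ((hasCycle_iff hn).mpr ⟨a (n * p), ?_⟩)⟩
  have hforth : HasPath R (n - (j + 1)) (a (n * p)) (a (n * q)) :=
    hasPath_of_chain ha (by omega) (by omega)
  simpa [show n - (j + 1) + (j + 1) = n by omega] using hforth.append hback

end Relation

section

open Relation

variable {L : FirstOrder.Language.{u, v}} {d : ℕ}

noncomputable def pathFormula (φ : L.Formula (Fin d ⊕ Fin d)) :
    ℕ → L.Formula (Fin d ⊕ Fin d)
  | 0 => φ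
  | k + 1 => Formula.iExs (Fin d)
      (φ.relabel (Sum.elim (Sum.inl ∘ Sum.inl) Sum.inr) ⊓
        (pathFormula φ k).relabel (Sum.elim Sum.inr (Sum.inl ∘ Sum.inr)))

theorem realize_pathFormula {M : Type*} [L.Structure M] (φ : L.Formula (Fin d ⊕ Fin d))
    (k : ℕ) (x y : Fin d → M) :
    (pathFormula φ k).Realize (Sum.elim x y) ↔
      HasPath (fun x y => φ.Realize (Sum.elim x y)) (k + 1) x y := by
  induction k generalizing x with
  | zero => rw [pathFormula, hasPath_one]
  | succ k ih =>
    have hx : ∀ z : Fin d → M,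
        Sum.elim (Sum.elim x y) z ∘ Sum.elim (Sum.inl ∘ Sum.inl) Sum.inr = Sum.elim x z :=
      fun z => by ext (_ | _) <;> rfl
    have hy : ∀ z : Fin d → M,
        Sum.elim (Sum.elim x y) z ∘ Sum.elim Sum.inr (Sum.inl ∘ Sum.inr) = Sum.elim z y :=
      fun z => by ext (_ | _) <;> rfl
    simp only [pathFormula, Formula.realize_iExs, Formula.realize_inf, Formula.realize_relabel,
      hx, hy, ih]
    rfl

noncomputable def pruneShortCyclesFormula (φ : L.Formula (Fin d ⊕ Fin d)) (n : ℕ) :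
    L.Formula (Fin d ⊕ Fin d) :=
  φ ⊓ Formula.iInf fun j : Fin (n - 2) => ∼((pathFormula φ j).relabel Sum.swap)

theorem realize_pruneShortCyclesFormula {M : Type*} [L.Structure M]
    (φ : L.Formula (Fin d ⊕ Fin d)) (n : ℕ) (x y : Fin d → M) :
    (pruneShortCyclesFormula φ n).Realize (Sum.elim x y) ↔
      PruneShortCycles (fun x y => φ.Realize (Sum.elim x y)) n x y := by
  simp [pruneShortCyclesFormula, PruneShortCycles, Formula.realize_relabel, Sum.elim_swap,
    realize_pathFormula, Fin.forall_iff]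

end

theorem stmt_14_general {L : FirstOrder.Language.{u, v}} (T : L.Theory) (n : ℕ)
    (h : ∃ (d : ℕ) (φ : L.Formula (Fin d ⊕ Fin d)), WitnessesSOP T n d φ) :
    ∃ (d : ℕ) (ψ : L.Formula (Fin d ⊕ Fin d)), WitnessesSOPLe T n d ψ := by
  obtain ⟨d, φ, M, a, hchain, hnocyc⟩ := h
  let R : (Fin d → M) → (Fin d → M) → Prop := fun x y => φ.Realize (Sum.elim x y)
  have hR : ¬ Relation.HasCycle R n := hnocyc
  have hψ := realize_pruneShortCyclesFormula (M := M) φ n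
  refine ⟨d, pruneShortCyclesFormula φ n, M, fun k => a (n * k), fun p q hpq => ?_, ?_⟩
  · exact (hψ _ _).mpr (Relation.pruneShortCycles_of_chain hR hchain hpq)
  · intro m h2m hmn hcyc
    have hcyc' : Relation.HasCycle (Relation.PruneShortCycles R n) m :=
      Relation.HasCycle.mono (fun x y => (hψ x y).mp) hcyc
    rcases hmn.lt_or_eq with hlt | rfl
    · exact Relation.not_hasCycle_pruneShortCycles h2m hlt hcyc'
    · exact hR (hcyc'.mono fun _ _ => Relation.PruneShortCycles.le)

/-- from Claim 2.6, `SOP_n ⇔ SOP_{≤n}`: for a complete theory `T`, if some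
formula witnesses `SOP_n`, then some (possibly different) formula witnesses `SOP_{≤n}`. -/
theorem stmt_14 {L : FirstOrder.Language.{u, v}} (T : L.Theory) (hT : T.IsComplete) (n : ℕ)
    (h : ∃ (d : ℕ) (φ : L.Formula (Fin d ⊕ Fin d)), WitnessesSOP T n d φ) :
    ∃ (d : ℕ) (ψ : L.Formula (Fin d ⊕ Fin d)), WitnessesSOPLe T n d ψ :=
  stmt_14_general T n h
end
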